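/- Let n ≥ 3 and let Γ be a finite-index subgroup of SL(n,ℤ), acting linearly on ℝⁿ. Every nonempty proper closed Γ-invariant subset C of ℝⁿ∖{0} is a finite union of sets of the form Γ·(F·u) = {γ(tu) : γ ∈ Γ, t ∈ F}, where u ∈ ℚⁿ∖{0} is a rational vector and F is a closed subset of [0,∞) not containing 0. -/

import Mathlib

open Set Filter Topology MeasureTheory Matrix Function
noncomputable section
namespace Zeghib

/-- `ℝⁿ` (with the sup norm; the choice of norm is irrelevant). -/
abbrev V (n : ℕ) : Type := Fin n → ℝ

abbrev SLR (n : ℕ) := Matrix.SpecialLinearGroup (Fin n) ℝ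
abbrev SLZ (n : ℕ) := Matrix.SpecialLinearGroup (Fin n) ℤ

/-- The topology on `SL(n,ℝ)` induced from the space of matrices. -/
instance {n : ℕ} : TopologicalSpace (SLR n) :=
  TopologicalSpace.induced (fun g => (g : Matrix (Fin n) (Fin n) ℝ)) inferInstance

/-- The linear action of `SL(n,ℝ)` on `ℝⁿ`. -/
def lact {n : ℕ} (γ : SLR n) (u : V n) : V n := (γ : Matrix (Fin n) (Fin n) ℝ).mulVec u

lemma lact_mul {n : ℕ} (A B : SLR n) (v : V n) : lact (A * B) v = lact A (lact B v) := by
  simp only [lact, Matrix.SpecialLinearGroup.coe_mul]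
  rw [Matrix.mulVec_mulVec]

lemma lact_one {n : ℕ} (v : V n) : lact (1 : SLR n) v = v := by
  simp [lact]

/-- The coefficient-wise embedding `SL(n,ℤ) →* SL(n,ℝ)`. -/
def slCast {n : ℕ} : SLZ n →* SLR n := Matrix.SpecialLinearGroup.map (Int.castRingHom ℝ)

/-- `SL(n,ℤ)` viewed as a subgroup of `SL(n,ℝ)`. -/
def SLZR (n : ℕ) : Subgroup (SLR n) := MonoidHom.range (slCast (n := n))

/-- A subgroup `Δ` of a topological group `G` is a lattice if it is discrete and the
quotient `G ⧸ Δ` carries a nonzero finite `G`-invariant (Borel) measure. -/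
def IsLatticeIn (G : Type*) [Group G] [TopologicalSpace G] (Δ : Subgroup G) : Prop :=
  DiscreteTopology Δ ∧
    letI : MeasurableSpace (G ⧸ Δ) := borel _
    ∃ μ : Measure (G ⧸ Δ), μ ≠ 0 ∧ IsFiniteMeasure μ ∧
      ∀ g : G, Measure.map (fun x => g • x) μ = μ

/-- `Γ ≤ SL(n,ℝ)` is, up to an automorphism of (the topological group) `SL(n,ℝ)`,
a finite-index subgroup of `SL(n,ℤ)`. -/
def UpToAutoFiniteIndexSLZ {n : ℕ} (Γ : Subgroup (SLR n)) : Prop :=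
  ∃ σ : SLR n ≃* SLR n, Continuous σ ∧ Continuous σ.symm ∧
    Γ.map σ.toMonoidHom ≤ SLZR n ∧ ((Γ.map σ.toMonoidHom).subgroupOf (SLZR n)).FiniteIndex

/-!
A finite-index subgroup `Γ` contains the elementary matrices `1 + m c E_ij` (`c ∈ ℤ`) for one
fixed `m ≠ 0`, so `C` is stable under the shears adding `m c v_j` to the coordinate `v_i`.
If some `v ∈ C` has two coordinates with irrational ratio, shearing along them moves any third
coordinate through a dense subgroup of `ℝ`, and a few such moves (this is where `n ≥ 3` enters)
put every vector with an irrational coordinate ratio into `C`; these are dense, so `C` would be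
all of `ℝⁿ ∖ {0}`. Hence every `v ∈ C` is a positive multiple of an integer vector, which
Euclid's algorithm moves by `SL(n,ℤ)` to a positive multiple of `e₀`; the finitely many cosets
of `Γ` in `SL(n,ℤ)` give the finitely many rays. Shearing small vectors of `C` would approximate
`e_i + √2 e_i'`, so `C` stays away from `0`, which makes the sets of scalars `F` closed.
-/

section Transvection

open Matrix.SpecialLinearGroup

variable {ι R : Type*} [Fintype ι] [DecidableEq ι] [CommRing R] {i j : ι}

lemma transvection_smul (hij : i ≠ j) (c : R) (v : ι → R) :
    transvection hij c • v = update v i (v i + c * v j) := by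
  ext l
  rcases eq_or_ne l i with rfl | hl <;>
    simp [Matrix.SpecialLinearGroup.smul_def, transvection_coe, Matrix.add_mulVec,
      Matrix.single_mulVec, *]

lemma transvection_pow (hij : i ≠ j) (c : R) (k : ℕ) :
    transvection hij c ^ k = transvection hij (k * c) := by
  induction k with
  | zero => simp
  | succ k ih =>
    rw [pow_succ, ih, ← transvection_add]
    push_cast
    ring_nf

lemma map_transvection {S : Type*} [CommRing S] (f : R →+* S) (hij : i ≠ j) (c : R) :
    map f (transvection hij c) = transvection hij (f c) := by
  ext a b
  simp only [map_apply_coe, RingHom.mapMatrix_apply, transvection_coe, Matrix.map_apply]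
  simp [Matrix.one_apply, Matrix.single_apply]
  split_ifs <;> simp

lemma transvection_mem_of_finiteIndex (Γ : Subgroup (SpecialLinearGroup ι R)) [Γ.FiniteIndex]
    (hij : i ≠ j) (c : R) : transvection hij (Γ.index.factorial * c) ∈ Γ := by
  rw [← transvection_pow]
  exact Subgroup.pow_mem_of_index_ne_zero_of_dvd Subgroup.FiniteIndex.index_ne_zero _
    fun m hm hle => Nat.dvd_factorial hm hle

end Transvection

section IntegerOrbits

open MulAction Matrix.SpecialLinearGroup

variable {ι : Type*} [Fintype ι] [DecidableEq ι]

lemma single_mem_orbit_single {i j : ι} (hij : i ≠ j) (x : ℤ) :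
    (Pi.single i x : ι → ℤ) ∈ orbit (SpecialLinearGroup ι ℤ) (Pi.single j x : ι → ℤ) := by
  refine ⟨transvection hij.symm (-1) * transvection hij 1, ?_⟩
  ext l
  simp [mul_smul, transvection_smul, update_apply, Pi.single_apply, hij, hij.symm]
  split_ifs <;> simp_all

lemma neg_single_mem_orbit_single {i j : ι} (hij : i ≠ j) (x : ℤ) :
    (Pi.single j (-x) : ι → ℤ) ∈ orbit (SpecialLinearGroup ι ℤ) (Pi.single i x : ι → ℤ) := by
  refine ⟨transvection hij 1 * transvection hij.symm (-1), ?_⟩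
  ext l
  simp [mul_smul, transvection_smul, update_apply, Pi.single_apply, hij, hij.symm]
  split_ifs <;> simp_all

lemma neg_single_mem_orbit_single_self {i j : ι} (hij : i ≠ j) (x : ℤ) :
    (Pi.single i (-x) : ι → ℤ) ∈ orbit (SpecialLinearGroup ι ℤ) (Pi.single i x : ι → ℤ) :=
  orbit_eq_iff.mpr (neg_single_mem_orbit_single hij x) ▸ single_mem_orbit_single hij (-x)

lemma _root_.Int.natAbs_emod_lt_of_natAbs_le {a b : ℤ} (hb : b ≠ 0) (h : b.natAbs ≤ a.natAbs) :
    (a % b).natAbs < a.natAbs := by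
  have := Int.emod_nonneg a hb
  have := Int.emod_lt_abs a hb
  rw [Int.abs_eq_natAbs] at this
  omega

lemma sum_natAbs_update_lt {p : ι → ℤ} {i : ι} {a : ℤ} (h : a.natAbs < (p i).natAbs) :
    ∑ l, (update p i a l).natAbs < ∑ l, (p l).natAbs := by
  refine Finset.sum_lt_sum (fun l _ => ?_) ⟨i, Finset.mem_univ i, by simpa using h⟩
  rcases eq_or_ne l i with rfl | hl
  · simpa using h.le
  · simp [hl]

/-- Euclid's algorithm, run with elementary row operations. -/
lemma exists_mem_orbit_single (i₀ : ι) (p : ι → ℤ) :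
    ∃ x : ℤ, p ∈ orbit (SpecialLinearGroup ι ℤ) (Pi.single i₀ x : ι → ℤ) := by
  induction hN : ∑ l, (p l).natAbs using Nat.strong_induction_on generalizing p with
  | _ N ih =>
  by_cases hred : ∃ i j, i ≠ j ∧ p j ≠ 0 ∧ (p j).natAbs ≤ (p i).natAbs
  · obtain ⟨i, j, hij, hpj, hle⟩ := hred
    set g := transvection hij (-(p i / p j))
    have hgp : g • p = update p i (p i % p j) := by
      rw [transvection_smul, Int.emod_def]
      ring_nf
    obtain ⟨x, hx⟩ := ih _ (hN ▸ hgp ▸ sum_natAbs_update_lt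
      (Int.natAbs_emod_lt_of_natAbs_le hpj hle)) (g • p) rfl
    exact ⟨x, inv_smul_smul g p ▸ mem_orbit_of_mem_orbit g⁻¹ hx⟩
  -- No reduction step applies, so `p` has at most one nonzero coordinate.
  push Not at hred
  rcases eq_or_ne p 0 with rfl | hp
  · exact ⟨0, by simp⟩
  obtain ⟨l, hl⟩ := Function.ne_iff.mp hp
  have hpl : p = Pi.single l (p l) := by
    ext j
    rcases eq_or_ne j l with rfl | hjl
    · simp
    rw [Pi.single_eq_of_ne hjl]
    by_contra hj
    have := hred l j hjl.symm hj
    have := hred j l hjl hl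
    omega
  refine ⟨p l, ?_⟩
  rcases eq_or_ne l i₀ with rfl | hl₀
  · exact hpl ▸ mem_orbit_self _
  · rw [hpl, Pi.single_eq_same]
    exact single_mem_orbit_single hl₀ _

lemma exists_pos_mem_orbit_single [Nontrivial ι] (i₀ : ι) {p : ι → ℤ} (hp : p ≠ 0) :
    ∃ x : ℤ, 0 < x ∧ p ∈ orbit (SpecialLinearGroup ι ℤ) (Pi.single i₀ x : ι → ℤ) := by
  obtain ⟨x, hx⟩ := exists_mem_orbit_single i₀ p
  have hx₀ : x ≠ 0 := by
    rintro rfl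
    obtain ⟨A, hA⟩ := hx
    exact hp (by simpa using hA.symm)
  rcases hx₀.lt_or_gt with hneg | hpos
  · obtain ⟨j, hj⟩ := exists_ne i₀
    refine ⟨-x, neg_pos.mpr hneg, ?_⟩
    rwa [← orbit_eq_iff.mpr (neg_neg x ▸ neg_single_mem_orbit_single_self hj.symm (-x))]
  · exact ⟨x, hpos, hx⟩

end IntegerOrbits

lemma _root_.Subgroup.exists_fin_forall_eq_mul {G : Type*} [Group G] (H : Subgroup G)
    [H.FiniteIndex] : ∃ (k : ℕ) (s : Fin k → G), ∀ g : G, ∃ i, ∃ h ∈ H, g = h * s i := by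
  obtain ⟨k, ⟨e⟩⟩ := Finite.exists_equiv_fin (G ⧸ H)
  refine ⟨k, fun i => (e.symm i).out⁻¹, fun g => ⟨e (g⁻¹ : G), ?_⟩⟩
  obtain ⟨h, hh⟩ := QuotientGroup.mk_out_eq_mul H g⁻¹
  exact ⟨h, h.2, by simp [hh]⟩

section RealApproximation

lemma left_ne_zero_of_irrational_div {x y : ℝ} (h : Irrational (x / y)) : x ≠ 0 := by
  rintro rfl
  simp at h

lemma right_ne_zero_of_irrational_div {x y : ℝ} (h : Irrational (x / y)) : y ≠ 0 := by
  rintro rfl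
  simp at h

lemma exists_irrational_div_irrational_div {a b : ℝ} (ha : a ≠ 0) (hb : b ≠ 0) :
    ∃ x : ℝ, Irrational (x / a) ∧ Irrational (x / b) := by
  have hcount : ((range fun q : ℚ => (q : ℝ) * a) ∪ range fun q : ℚ => (q : ℝ) * b).Countable :=
    (countable_range _).union (countable_range _)
  obtain ⟨x, hx⟩ := (hcount.dense_compl ℝ).nonempty
  refine ⟨x, fun ⟨q, hq⟩ => hx (Or.inl ⟨q, ?_⟩), fun ⟨q, hq⟩ => hx (Or.inr ⟨q, ?_⟩)⟩
  · simp [hq, div_mul_cancel₀ _ ha]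
  · simp [hq, div_mul_cancel₀ _ hb]

lemma dense_setOf_irrational_div {ι : Type*} [DecidableEq ι] {j k : ι} (hjk : j ≠ k) :
    Dense {u : ι → ℝ | Irrational (u j / u k)} := by
  have hT : Dense ((range ((↑) : ℚ → ℝ) \ {0}) ×ˢ {b : ℝ | Irrational b}) :=
    Rat.denseRange_cast.sdiff_singleton 0 |>.prod dense_irrational
  intro w
  set φ : ℝ × ℝ → ι → ℝ := fun ab => update (update w k ab.1) j ab.2
  have hφ : Continuous φ := by fun_prop
  have hw : φ (w k, w j) = w := by simp [φ]
  have himg : φ '' ((range ((↑) : ℚ → ℝ) \ {0}) ×ˢ {b : ℝ | Irrational b}) ⊆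
      {u | Irrational (u j / u k)} := by
    rintro _ ⟨⟨_, b⟩, ⟨⟨⟨q, rfl⟩, hq⟩, hb⟩, rfl⟩
    simp only [mem_singleton_iff, Rat.cast_eq_zero] at hq
    simpa [φ, hjk, hjk.symm] using hb.div_ratCast hq
  exact closure_mono himg (hw ▸ mem_closure_image hφ.continuousAt (hT _))

lemma exists_int_abs_add_mul_sub_le (x s : ℝ) {t : ℝ} (ht : t ≠ 0) :
    ∃ c : ℤ, |x + c * t - s| ≤ |t| / 2 := by
  refine ⟨round ((s - x) / t), ?_⟩
  calc |x + round ((s - x) / t) * t - s| = |t| * |(s - x) / t - round ((s - x) / t)| := by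
        rw [← abs_mul, ← abs_neg]
        congr 1
        field_simp
        ring
    _ ≤ |t| / 2 := by
        have := abs_sub_round ((s - x) / t)
        nlinarith [abs_nonneg t]

end RealApproximation

section Shears

variable {n : ℕ}

/-- What the argument uses of a closed `Γ`-invariant subset of `ℝⁿ ∖ {0}`, when `Γ` contains the
elementary matrices `1 + m c E_ij` for all `c ∈ ℤ`. -/
structure ShearClosed (m : ℝ) (C : Set (V n)) : Prop where
  step_ne_zero : m ≠ 0
  ne_zero : ∀ v ∈ C, v ≠ 0
  mem_of_mem_closure : ∀ v, v ≠ 0 → v ∈ closure C → v ∈ C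
  update_mem : ∀ v ∈ C, ∀ i j, i ≠ j → ∀ c : ℤ, update v i (v i + m * c * v j) ∈ C

namespace ShearClosed

variable {m : ℝ} {C : Set (V n)}

lemma update_mem_of_irrational (hC : ShearClosed m C) {v : V n} (hv : v ∈ C) {i j k : Fin n}
    (hij : i ≠ j) (hik : i ≠ k) (hirr : Irrational (v j / v k)) (s : ℝ) :
    update v i s ∈ C := by
  have hdense : Dense (AddSubgroup.closure {m * v j, m * v k} : Set ℝ) := by
    rwa [dense_addSubgroupClosure_pair_iff, mul_div_mul_left _ _ hC.step_ne_zero]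
  have hshift : ∀ d ∈ AddSubgroup.closure {m * v j, m * v k}, update v i (v i + d) ∈ C := by
    intro d hd
    obtain ⟨a, b, rfl⟩ := AddSubgroup.mem_closure_pair.mp hd
    have := hC.update_mem _ (hC.update_mem v hv i j hij a) i k hik b
    rw [update_idem, update_self, update_of_ne hik.symm] at this
    convert this using 2
    simp only [zsmul_eq_mul]
    ring
  refine hC.mem_of_mem_closure _ (fun h => right_ne_zero_of_irrational_div hirr ?_) ?_
  · simpa [update_of_ne hik.symm] using congrFun h k
  · have hf : Continuous fun d : ℝ => update v i (v i + d) := by fun_prop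
    have := mem_closure_image hf.continuousAt (hdense (s - v i))
    simpa using closure_mono (image_subset_iff.mpr hshift) this

lemma mem_of_apply_eq_of_irrational (hC : ShearClosed m C) {v u : V n} (hv : v ∈ C)
    {j k : Fin n} (hirr : Irrational (v j / v k)) (hj : u j = v j) (hk : u k = v k) : u ∈ C := by
  suffices ∀ s : Finset (Fin n), ∀ u : V n, u j = v j → u k = v k → (∀ l ∉ s, u l = v l) → u ∈ C
    from this Finset.univ u hj hk (by simp)
  intro s
  induction s using Finset.induction_on with
  | empty => exact fun u _ _ hu => (funext fun l => hu l (Finset.notMem_empty l)) ▸ hv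
  | insert a s _ ih =>
    intro u hj hk hu
    have hmem : update u a (v a) ∈ C := by
      refine ih _ ?_ ?_ fun l hl => ?_ <;> rw [update_apply] <;> split_ifs with h
      exacts [h ▸ rfl, hj, h ▸ rfl, hk, h ▸ rfl, hu l (by simp [h, hl])]
    by_cases hua : u a = v a
    · rwa [← hua, update_eq_self] at hmem
    · have haj : a ≠ j := fun h => hua (h ▸ hj)
      have hak : a ≠ k := fun h => hua (h ▸ hk)
      have := hC.update_mem_of_irrational hmem haj hak
        (by rwa [update_of_ne haj.symm, update_of_ne hak.symm, hj, hk]) (u a)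
      rwa [update_idem, update_eq_self] at this

lemma eq_of_irrational (hC : ShearClosed m C) (hn : 3 ≤ n) {v : V n} (hv : v ∈ C)
    {j k : Fin n} (hirr : Irrational (v j / v k)) : C = {w | w ≠ 0} := by
  have hjk : j ≠ k := by
    rintro rfl
    exact hirr ⟨if v j = 0 then 0 else 1, by split_ifs with h <;> simp [h]⟩
  obtain ⟨i₀, hi₀j, hi₀k⟩ := Fin.exists_ne_and_ne_of_two_lt j k (by omega)
  -- Put `x` in coordinate `i₀`, then `w j` in `j` (using `x / v k`), then all of `w` except
  -- coordinate `i₀` (using `x / w j`), and finally `w i₀` (using `w j / w k`).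
  have hsub : {w : V n | Irrational (w j / w k)} ⊆ C := by
    intro w hw
    obtain ⟨x, hxv, hxw⟩ := exists_irrational_div_irrational_div
      (right_ne_zero_of_irrational_div hirr) (left_ne_zero_of_irrational_div hw)
    have h₁ := hC.update_mem_of_irrational hv hi₀j hi₀k hirr x
    have h₂ := hC.update_mem_of_irrational h₁ hi₀j.symm hjk
      (by rwa [update_self, update_of_ne hi₀k.symm]) (w j)
    have h₃ := hC.mem_of_apply_eq_of_irrational h₂ (j := i₀) (k := j) (u := update w i₀ x)
      (by rwa [update_self, update_of_ne hi₀j, update_self]) (by simp [hi₀j])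
      (by simp [hi₀j.symm])
    simpa using hC.update_mem_of_irrational h₃ hi₀j hi₀k
      (by rwa [update_of_ne hi₀j.symm, update_of_ne hi₀k.symm]) (w i₀)
  refine subset_antisymm hC.ne_zero fun w hw => hC.mem_of_mem_closure w hw ?_
  exact closure_mono hsub (dense_setOf_irrational_div hjk w)

lemma exists_update_mem_near (hC : ShearClosed m C) {v : V n} (hv : v ∈ C) {i j : Fin n}
    (hij : i ≠ j) (hvj : v j ≠ 0) (s : ℝ) :
    ∃ a, |a - s| ≤ |m * v j| / 2 ∧ update v i a ∈ C := by
  obtain ⟨c, hc⟩ := exists_int_abs_add_mul_sub_le (v i) s (mul_ne_zero hC.step_ne_zero hvj)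
  exact ⟨_, by convert hc using 3; ring, hC.update_mem v hv i j hij c⟩

lemma single_add_single_mem_closure (hC : ShearClosed m C) {i i' j₀ : Fin n} (hi'i : i' ≠ i)
    (hij₀ : i ≠ j₀) (hi'j₀ : i' ≠ j₀) (hj₀ : ∃ᶠ v in 𝓝 (0 : V n), v ∈ C ∧ v j₀ ≠ 0) (a b : ℝ) :
    Pi.single i a + Pi.single i' b ∈ closure C := by
  refine Metric.mem_closure_iff.mpr fun ε hε => ?_
  set δ := ε / (|m| + 1)
  have hδ : 0 < δ := by positivity
  obtain ⟨v, ⟨hvC, hvj₀⟩, hvδ⟩ := (hj₀.and_eventually (Metric.ball_mem_nhds 0 hδ)).exists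
  rw [dist_zero_right] at hvδ
  have hvl : ∀ l, |v l| < δ := fun l => (norm_le_pi_norm v l).trans_lt hvδ
  have hδε : δ ≤ ε := div_le_self hε.le (by linarith [abs_nonneg m])
  have hmv : |m * v j₀| / 2 < ε := by
    have : |m| * δ < ε := by
      rw [mul_div_assoc', div_lt_iff₀ (by positivity)]
      linarith
    rw [abs_mul]
    nlinarith [abs_nonneg m, hvl j₀, abs_nonneg (v j₀)]
  -- Shears by multiples of the tiny `m * v j₀` fix coordinates `i` and `i'` up to `|m * v j₀| / 2`.
  obtain ⟨a', ha', h₁⟩ := hC.exists_update_mem_near hvC hij₀ hvj₀ a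
  obtain ⟨b', hb', h₂⟩ := hC.exists_update_mem_near h₁ hi'j₀
    (by rwa [update_of_ne hij₀.symm]) b
  rw [update_of_ne hij₀.symm] at hb'
  refine ⟨_, h₂, (dist_pi_lt_iff hε).mpr fun l => ?_⟩
  rw [Real.dist_eq, abs_sub_comm]
  by_cases hl' : l = i'
  · subst hl'
    simpa [hi'i] using hb'.trans_lt hmv
  by_cases hl : l = i
  · subst hl
    simpa [hl'] using ha'.trans_lt hmv
  · simpa [hl, hl'] using (hvl l).trans_le hδε

lemma zero_notMem_closure (hC : ShearClosed m C) (hn : 3 ≤ n)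
    (hrat : ∀ v ∈ C, ∀ j k, ¬Irrational (v j / v k)) : (0 : V n) ∉ closure C := by
  intro h0
  obtain ⟨j₀, hj₀⟩ : ∃ j₀, ∃ᶠ v in 𝓝 (0 : V n), v ∈ C ∧ v j₀ ≠ 0 := by
    rw [← frequently_exists]
    refine (mem_closure_iff_frequently.mp h0).mono fun v hv => ?_
    obtain ⟨j, hj⟩ := Function.ne_iff.mp (hC.ne_zero v hv)
    exact ⟨j, hv, hj⟩
  obtain ⟨i, hij₀, -⟩ := Fin.exists_ne_and_ne_of_two_lt j₀ j₀ (by omega)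
  obtain ⟨i', hi'i, hi'j₀⟩ := Fin.exists_ne_and_ne_of_two_lt i j₀ (by omega)
  have hw := hC.single_add_single_mem_closure hi'i hij₀ hi'j₀ hj₀ 1 √2
  refine hrat _ (hC.mem_of_mem_closure _ (fun h => ?_) hw) i' i ?_
  · simpa [hi'i.symm] using congrFun h i
  · simpa [hi'i, hi'i.symm] using irrational_sqrt_two

end ShearClosed

end Shears

lemma exists_pos_smul_intCast {ι : Type*} [Fintype ι] {v : ι → ℝ} (hv : v ≠ 0)
    (hrat : ∀ j k, ¬Irrational (v j / v k)) :
    ∃ t : ℝ, 0 < t ∧ ∃ p : ι → ℤ, v = t • fun l => (p l : ℝ) := by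
  obtain ⟨k, hk⟩ : ∃ k, v k ≠ 0 := Function.ne_iff.mp hv
  choose q hq using fun l => not_not.mp (hrat l k)
  set N : ℕ := ∏ l, (q l).den
  have hN : (N : ℝ) ≠ 0 :=
    Nat.cast_ne_zero.mpr (Finset.prod_ne_zero_iff.mpr fun l _ => (q l).den_nz)
  have hz : ∀ l, ∃ z : ℤ, (z : ℝ) = N * q l := by
    intro l
    obtain ⟨e, he⟩ := Finset.dvd_prod_of_mem (fun l => (q l).den) (Finset.mem_univ l)
    refine ⟨e * (q l).num, ?_⟩
    rw [show (N : ℝ) = (q l).den * e by exact_mod_cast he, Int.cast_mul, Int.cast_natCast,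
      ← Rat.cast_intCast, ← Rat.den_mul_eq_num]
    push_cast
    ring
  choose z hz using hz
  have hvz : v = (v k / N) • fun l => (z l : ℝ) := by
    ext l
    simp only [Pi.smul_apply, smul_eq_mul, hz, hq]
    field_simp [hk]
  have ht := div_ne_zero hk hN
  generalize v k / N = t at hvz ht
  rcases ht.lt_or_gt with hneg | hpos
  · exact ⟨-t, neg_pos.mpr hneg, -z, by rw [hvz]; ext; simp⟩
  · exact ⟨t, hpos, z, hvz⟩

lemma isClosed_setOf_pos_smul_mem {E : Type*} [NormedAddCommGroup E] [NormedSpace ℝ E]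
    {C : Set E} (h0 : (0 : E) ∉ closure C) (hC : ∀ v, v ≠ 0 → v ∈ closure C → v ∈ C) (u : E) :
    IsClosed {t : ℝ | 0 < t ∧ t • u ∈ C} := by
  refine isClosed_of_closure_subset fun t ht => ?_
  have hf : Continuous fun t : ℝ => t • u := by fun_prop
  have htu : t • u ∈ closure C :=
    closure_mono (image_subset_iff.mpr fun s (hs : 0 < s ∧ s • u ∈ C) => hs.2)
      (mem_closure_image (f := fun t : ℝ => t • u) hf.continuousAt ht)
  have hpos : 0 ≤ t := closure_lt_subset_le continuous_const continuous_id
    (closure_mono (fun s hs => hs.1) ht)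
  have htu₀ : t • u ≠ 0 := fun h => h0 (h ▸ htu)
  exact ⟨hpos.lt_of_ne (by rintro rfl; simp at htu₀), hC _ htu₀ htu⟩

section Lattice

variable {n : ℕ}

lemma lact_eq_smul (g : SLR n) (v : V n) : lact g v = g • v := rfl

lemma cast_smul_eq_slCast_smul (A : SLZ n) (p : Fin n → ℤ) :
    (fun l => ((A • p) l : ℝ)) = slCast A • fun l => (p l : ℝ) := by
  ext l
  simp [slCast, Matrix.SpecialLinearGroup.smul_def, Matrix.mulVec, dotProduct]

lemma shearClosed_of_finiteIndex {Γ : Subgroup (SLZ n)} [Γ.FiniteIndex] {C : Set (V n)}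
    (hsub : C ⊆ {v : V n | v ≠ 0})
    (hclosed : IsClosed (Subtype.val ⁻¹' C : Set {v : V n // v ≠ 0}))
    (hinv : ∀ γ ∈ Γ, ∀ v ∈ C, lact (slCast γ) v ∈ C) :
    ShearClosed (Γ.index.factorial : ℝ) C where
  step_ne_zero := by positivity
  ne_zero := hsub
  mem_of_mem_closure v hv hcl :=
    (isClosed_preimage_val (s := {v : V n | v ≠ 0}) (t := C)).mp hclosed
      ⟨hv, by rwa [inter_eq_right.mpr hsub]⟩
  update_mem v hv i j hij c := by
    have := hinv _ (transvection_mem_of_finiteIndex Γ hij c) v hv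
    rwa [lact_eq_smul, slCast, map_transvection, transvection_smul, map_mul, map_natCast,
      eq_intCast] at this

lemma exists_eq_lact_pos_smul_single (hn : 2 ≤ n) {v : V n} (hv : v ≠ 0)
    (hrat : ∀ j k, ¬Irrational (v j / v k)) (i₀ : Fin n) :
    ∃ A : SLZ n, ∃ t : ℝ, 0 < t ∧ v = lact (slCast A) (t • Pi.single i₀ 1) := by
  have : Nontrivial (Fin n) := Fin.nontrivial_iff_two_le.mpr hn
  obtain ⟨t, ht, p, rfl⟩ := exists_pos_smul_intCast hv hrat
  obtain ⟨x, hx, A, rfl⟩ := exists_pos_mem_orbit_single i₀ (p := p)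
    (by rintro rfl; exact hv (by ext; simp))
  refine ⟨A, t * x, by positivity, ?_⟩
  rw [cast_smul_eq_slCast_smul, lact_eq_smul, smul_comm (slCast A) (t * x : ℝ), mul_smul,
    ← smul_comm (slCast A) (x : ℝ)]
  congr 2
  ext l
  simp [Pi.single_apply]

lemma eq_iUnion_lact_smul {Γ : Subgroup (SLZ n)} {C : Set (V n)}
    (hinv : ∀ γ ∈ Γ, ∀ v ∈ C, lact (slCast γ) v ∈ C) {k : ℕ} {s : Fin k → SLZ n}
    (hs : ∀ A : SLZ n, ∃ i, ∃ γ ∈ Γ, A = γ * s i) {e : V n}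
    (hC : ∀ v ∈ C, ∃ A : SLZ n, ∃ t : ℝ, 0 < t ∧ v = lact (slCast A) (t • e)) :
    C = ⋃ i, {w : V n | ∃ γ ∈ Γ, ∃ t ∈ {t : ℝ | 0 < t ∧ t • lact (slCast (s i)) e ∈ C},
      w = lact (slCast γ) (t • lact (slCast (s i)) e)} := by
  refine subset_antisymm (fun v hv => ?_) (iUnion_subset fun i => ?_)
  · obtain ⟨A, t, ht, rfl⟩ := hC v hv
    obtain ⟨i, γ, hγ, rfl⟩ := hs A
    have hv' : lact (slCast (γ * s i)) (t • e) = lact (slCast γ) (t • lact (slCast (s i)) e) := by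
      rw [map_mul, lact_eq_smul, lact_eq_smul, lact_eq_smul, mul_smul, smul_comm (slCast (s i)) t]
    refine mem_iUnion.mpr ⟨i, γ, hγ, t, ⟨ht, ?_⟩, hv'⟩
    simpa [hv', ← lact_mul, ← map_mul, lact_one] using hinv γ⁻¹ (inv_mem hγ) _ hv
  · rintro _ ⟨γ, hγ, t, ht, rfl⟩
    exact hinv γ hγ _ ht.2

end Lattice

theorem statement_4_general (n : ℕ) (hn : 3 ≤ n) (Γ : Subgroup (SLZ n)) (hΓ : Γ.FiniteIndex)
    (C : Set (V n)) (hsub : C ⊆ {v : V n | v ≠ 0})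
    (hproper : C ≠ {v : V n | v ≠ 0})
    (hclosed : IsClosed (Subtype.val ⁻¹' C : Set {v : V n // v ≠ 0}))
    (hinv : ∀ γ ∈ Γ, ∀ v ∈ C, lact (slCast γ) v ∈ C) :
    ∃ (k : ℕ) (u : Fin k → (Fin n → ℚ)) (F : Fin k → Set ℝ),
      (∀ i, u i ≠ 0) ∧
      (∀ i, IsClosed (F i) ∧ F i ⊆ Ici (0:ℝ) ∧ (0:ℝ) ∉ F i) ∧
      C = ⋃ i, {w : V n | ∃ γ ∈ Γ, ∃ t ∈ F i, w = lact (slCast γ) (t • fun j => ((u i j : ℝ)))} := by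
  have hS := shearClosed_of_finiteIndex (Γ := Γ) hsub hclosed hinv
  have hrat : ∀ v ∈ C, ∀ j k, ¬Irrational (v j / v k) := fun v hv j k hirr =>
    hproper (hS.eq_of_irrational hn hv hirr)
  obtain ⟨k, s, hs⟩ := Γ.exists_fin_forall_eq_mul
  set i₀ : Fin n := ⟨0, by omega⟩
  set p : Fin k → Fin n → ℤ := fun i => s i • Pi.single i₀ 1
  have hp : ∀ i, (fun l => ((p i l : ℚ) : ℝ)) = lact (slCast (s i)) (Pi.single i₀ 1) := by
    intro i
    simp only [Rat.cast_intCast, p, cast_smul_eq_slCast_smul, lact_eq_smul]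
    congr 1
    ext l
    simp [Pi.single_apply]
  refine ⟨k, fun i l => p i l, fun i => {t | 0 < t ∧ t • lact (slCast (s i)) (Pi.single i₀ 1) ∈ C},
    fun i h => ?_, fun i => ⟨isClosed_setOf_pos_smul_mem (hS.zero_notMem_closure hn hrat)
      hS.mem_of_mem_closure _, fun t ht => ht.1.le, fun ht => ht.1.false⟩, ?_⟩
  · have hpi : p i = 0 := funext fun l => by simpa using congrFun h l
    simpa using congrFun ((smul_eq_zero_iff_eq (s i)).mp hpi) i₀
  simp only [hp]
  exact eq_iUnion_lact_smul hinv hs fun v hv =>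
    exists_eq_lact_pos_smul_single (by omega) (hsub hv) (hrat v hv) i₀

/-- For a finite-index subgroup `Γ` of `SL(n,ℤ)`, `n ≥ 3`, every nonempty
proper closed `Γ`-invariant subset of `ℝⁿ ∖ {0}` is a finite union of sets of the form
`Γ·(F·u)` with `u` a nonzero rational vector and `F ⊆ [0,∞)` closed with `0 ∉ F`. -/
theorem statement_4 (n : ℕ) (hn : 3 ≤ n) (Γ : Subgroup (SLZ n)) (hΓ : Γ.FiniteIndex)
    (C : Set (V n)) (hsub : C ⊆ {v : V n | v ≠ 0}) (hne : C.Nonempty)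
    (hproper : C ≠ {v : V n | v ≠ 0})
    (hclosed : IsClosed (Subtype.val ⁻¹' C : Set {v : V n // v ≠ 0}))
    (hinv : ∀ γ ∈ Γ, ∀ v ∈ C, lact (slCast γ) v ∈ C) :
    ∃ (k : ℕ) (u : Fin k → (Fin n → ℚ)) (F : Fin k → Set ℝ),
      (∀ i, u i ≠ 0) ∧
      (∀ i, IsClosed (F i) ∧ F i ⊆ Ici (0:ℝ) ∧ (0:ℝ) ∉ F i) ∧
      C = ⋃ i, {w : V n | ∃ γ ∈ Γ, ∃ t ∈ F i, w = lact (slCast γ) (t • fun j => ((u i j : ℝ)))} :=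
  statement_4_general n hn Γ hΓ C hsub hproper hclosed hinv
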